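/- arXiv:2006.11174 — 4 statements merged into one kernel-verified Lean document; each statement's English description precedes it below -/
import Mathlib

section
/- Let u : Fin 4 → ℂ and U = Σ_{α=0}^{3} u_α (σ_α ⊗ σ_α). For α < α' in {0,1,2,3} and signs s, t ∈ {+1, −1}, let A_s^{αα'} = (1/2)(σ_α + s·σ_{α'}) and B_t^{αα'} = (1/2)(σ_α + t·i·σ_{α'}). Then for every 4×4 complex matrix ρ: U ρ U† = Σ_α |u_α|² (σ_α⊗σ_α) ρ (σ_α⊗σ_α) + Σ_{α<α'} (u_α·conj(u_{α'}) + u_{α'}·conj(u_α)) · [ Σ_{s,t∈{±1}} s·t·(A_s^{αα'}⊗A_t^{αα'}) ρ (A_s^{αα'}⊗A_t^{αα'})† − Σ_{s,t∈{±1}} s·t·(B_s^{αα'}⊗B_t^{αα'}) ρ (B_s^{αα'}⊗B_t^{αα'})† ] + Σ_{α<α'} i·(u_α·conj(u_{α'}) − u_{α'}·conj(u_α)) · [ Σ_{s,t∈{±1}} s·t·( (A_s^{αα'}⊗B_t^{αα'}) ρ (A_s^{αα'}⊗B_t^{αα'})† + (B_s^{αα'}⊗A_t^{αα'}) ρ (B_s^{αα'}⊗A_t^{αα'})†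 ) ]. -/
open Matrix Kronecker

/-- The Pauli matrices `σ₀, σ₁, σ₂, σ₃` as 2×2 complex matrices. -/
noncomputable def pauli : Fin 4 → Matrix (Fin 2) (Fin 2) ℂ :=
  ![1, !![0, 1; 1, 0], !![0, -Complex.I; Complex.I, 0], !![1, 0; 0, -1]]

/-- `A_s^{αα'} = (σ_α + s σ_{α'})/2` for a sign `s = ±1`. -/
noncomputable def opA (s : ℤ) (α α' : Fin 4) : Matrix (Fin 2) (Fin 2) ℂ :=
  (1 / 2 : ℂ) • (pauli α + (s : ℂ) • pauli α')

/-- `B_t^{αα'} = (σ_α + t i σ_{α'})/2` for a sign `t = ±1`. -/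
noncomputable def opB (t : ℤ) (α α' : Fin 4) : Matrix (Fin 2) (Fin 2) ℂ :=
  (1 / 2 : ℂ) • (pauli α + ((t : ℂ) * Complex.I) • pauli α')

/-- The set of signs `{+1, −1}`. -/
def signs : Finset ℤ := {1, -1}

/-!
Expanding `U ρ U†` gives the diagonal terms `|u_α|² (σ_α⊗σ_α) ρ (σ_α⊗σ_α)` and, for each pair
`α < α'`, the cross terms `a P + b Q` with `P = (σ_α⊗σ_α) ρ (σ_α'⊗σ_α')†`, `Q` the same with `α, α'`
swapped, `a = u_α ū_α'` and `b = ā`. Put `X = σ_α`, `Y = σ_α'`. For local operators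
`(X + s ω₁ Y)/2 ⊗ (X + t ω₂ Y)/2`, the signed sum `Σ_{s,t} s t (·) ρ (·)†` keeps only the terms of
the expanded sandwich that are even in both `s` and `t`: these pair `X⊗X` with `Y⊗Y` and `X⊗Y`
with `Y⊗X`, with phases built from `ω₁, ω₂`. Choosing `ω₁, ω₂ ∈ {1, i}` isolates `P + Q` and
`i (Q - P)`, and `a P + b Q` is recovered by polarization.
-/

theorem Fintype.sum_sum_eq_sum_diag_add_sum_lt {ι M : Type*} [Fintype ι] [LinearOrder ι]
    [AddCommMonoid M] (f : ι → ι → M) :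
    ∑ i, ∑ j, f i j =
      ∑ i, f i i + ∑ i, ∑ j ∈ Finset.univ.filter (fun j => i < j), (f i j + f j i) := by
  have row_split (i : ι) : ∑ j, f i j = f i i + ∑ j ∈ Finset.univ.filter (fun j => i < j), f i j
      + ∑ j ∈ Finset.univ.filter (fun j => j < i), f i j := by
    rw [← Finset.sum_filter_add_sum_filter_not Finset.univ (fun j => i < j)]
    have hle : Finset.univ.filter (fun j => ¬ i < j) =
        insert i (Finset.univ.filter (fun j => j < i)) := by
      ext j
      simp [le_iff_eq_or_lt]
    rw [hle, Finset.sum_insert (by simp)]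
    abel
  have lower_eq_upper : ∑ i, ∑ j ∈ Finset.univ.filter (fun j => j < i), f i j =
      ∑ i, ∑ j ∈ Finset.univ.filter (fun j => i < j), f j i :=
    Finset.sum_comm' (by simp)
  simp only [row_split, Finset.sum_add_distrib, lower_eq_upper]
  abel

theorem Matrix.sum_smul_mul_mul_conjTranspose_sum_smul {R m n ι : Type*} [CommSemiring R]
    [StarRing R] [Fintype n] (s : Finset ι) (c : ι → R) (M : ι → Matrix m n R)
    (ρ : Matrix n n R) :
    (∑ i ∈ s, c i • M i) * ρ * (∑ i ∈ s, c i • M i)ᴴ =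
      ∑ i ∈ s, ∑ j ∈ s, (c i * starRingEnd R (c j)) • (M i * ρ * (M j)ᴴ) := by
  simp only [conjTranspose_sum, conjTranspose_smul, Matrix.sum_mul, Matrix.mul_sum,
    Matrix.smul_mul, Matrix.mul_smul, Finset.smul_sum, smul_smul, starRingEnd_apply]
  rw [Finset.sum_comm]
  refine Finset.sum_congr rfl fun i _ => Finset.sum_congr rfl fun j _ => ?_
  rw [mul_comm]

section Polarization

variable {m n : Type*} [Fintype n]

noncomputable def signedHalfSum (X Y : Matrix m n ℂ) (ω : ℂ) (s : ℤ) : Matrix m n ℂ :=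
  (1 / 2 : ℂ) • (X + ((s : ℂ) * ω) • Y)

variable (X Y : Matrix m n ℂ) (ρ : Matrix (n × n) (n × n) ℂ)

theorem sum_signs_signedHalfSum_kronecker_sandwich (ω₁ ω₂ : ℂ) :
    ∑ s ∈ signs, ∑ t ∈ signs, ((s * t : ℤ) : ℂ) •
        ((signedHalfSum X Y ω₁ s ⊗ₖ signedHalfSum X Y ω₂ t) * ρ *
          (signedHalfSum X Y ω₁ s ⊗ₖ signedHalfSum X Y ω₂ t)ᴴ) =
      (1 / 4 : ℂ) • (starRingEnd ℂ (ω₁ * ω₂) • ((X ⊗ₖ X) * ρ * (Y ⊗ₖ Y)ᴴ)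
        + (ω₁ * ω₂) • ((Y ⊗ₖ Y) * ρ * (X ⊗ₖ X)ᴴ)
        + (starRingEnd ℂ ω₁ * ω₂) • ((X ⊗ₖ Y) * ρ * (Y ⊗ₖ X)ᴴ)
        + (ω₁ * starRingEnd ℂ ω₂) • ((Y ⊗ₖ X) * ρ * (X ⊗ₖ Y)ᴴ)) := by
  simp only [signs, Finset.sum_pair (show (1 : ℤ) ≠ -1 by decide), signedHalfSum,
    conjTranspose_add, conjTranspose_smul, add_kronecker, kronecker_add, smul_kronecker,
    kronecker_smul, Matrix.add_mul, Matrix.mul_add, Matrix.smul_mul, Matrix.mul_smul,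
    smul_smul, smul_add, Complex.star_def]
  push_cast
  simp only [map_mul, map_neg, map_one, map_div₀, map_ofNat]
  match_scalars <;> ring

theorem cross_sandwich_eq_sum_signs (a b : ℂ) :
    a • ((X ⊗ₖ X) * ρ * (Y ⊗ₖ Y)ᴴ) + b • ((Y ⊗ₖ Y) * ρ * (X ⊗ₖ X)ᴴ) =
      (a + b) •
          ((∑ s ∈ signs, ∑ t ∈ signs, ((s * t : ℤ) : ℂ) •
              ((signedHalfSum X Y 1 s ⊗ₖ signedHalfSum X Y 1 t) * ρ *
                (signedHalfSum X Y 1 s ⊗ₖ signedHalfSum X Y 1 t)ᴴ))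
            - (∑ s ∈ signs, ∑ t ∈ signs, ((s * t : ℤ) : ℂ) •
              ((signedHalfSum X Y Complex.I s ⊗ₖ signedHalfSum X Y Complex.I t) * ρ *
                (signedHalfSum X Y Complex.I s ⊗ₖ signedHalfSum X Y Complex.I t)ᴴ)))
        + (Complex.I * (a - b)) •
          (∑ s ∈ signs, ∑ t ∈ signs, ((s * t : ℤ) : ℂ) •
            ((signedHalfSum X Y 1 s ⊗ₖ signedHalfSum X Y Complex.I t) * ρ *
                (signedHalfSum X Y 1 s ⊗ₖ signedHalfSum X Y Complex.I t)ᴴ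
              + (signedHalfSum X Y Complex.I s ⊗ₖ signedHalfSum X Y 1 t) * ρ *
                (signedHalfSum X Y Complex.I s ⊗ₖ signedHalfSum X Y 1 t)ᴴ)) := by
  simp only [smul_add, Finset.sum_add_distrib, sum_signs_signedHalfSum_kronecker_sandwich,
    map_one, map_mul, Complex.conj_I]
  match_scalars <;> ring_nf <;> simp only [Complex.I_sq] <;> ring

end Polarization

theorem Matrix.IsHermitian.kronecker {R l n : Type*} [CommSemiring R] [StarRing R]
    {A : Matrix l l R} {B : Matrix n n R} (hA : A.IsHermitian) (hB : B.IsHermitian) :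
    (A ⊗ₖ B).IsHermitian := by
  rw [IsHermitian, conjTranspose_kronecker, hA.eq, hB.eq]

theorem pauli_isHermitian (α : Fin 4) : (pauli α).IsHermitian := by
  fin_cases α <;>
    · ext i j
      fin_cases i <;> fin_cases j <;> simp [pauli, conjTranspose_apply]

theorem opA_eq_signedHalfSum (s : ℤ) (α α' : Fin 4) :
    opA s α α' = signedHalfSum (pauli α) (pauli α') 1 s := by
  rw [opA, signedHalfSum, mul_one]

theorem opB_eq_signedHalfSum (t : ℤ) (α α' : Fin 4) :
    opB t α α' = signedHalfSum (pauli α) (pauli α') Complex.I t :=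
  rfl

theorem stmt5 (u : Fin 4 → ℂ) (ρ : Matrix (Fin 2 × Fin 2) (Fin 2 × Fin 2) ℂ) :
    (∑ α : Fin 4, u α • (pauli α ⊗ₖ pauli α)) * ρ *
        (∑ α : Fin 4, u α • (pauli α ⊗ₖ pauli α))ᴴ
    = (∑ α : Fin 4, ((‖u α‖ : ℂ) ^ 2) •
          ((pauli α ⊗ₖ pauli α) * ρ * (pauli α ⊗ₖ pauli α)))
      + (∑ α : Fin 4, ∑ α' ∈ Finset.univ.filter (fun a => α < a),
          (u α * (starRingEnd ℂ) (u α') + u α' * (starRingEnd ℂ) (u α)) •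
            ((∑ s ∈ signs, ∑ t ∈ signs, ((s * t : ℤ) : ℂ) •
                ((opA s α α' ⊗ₖ opA t α α') * ρ * (opA s α α' ⊗ₖ opA t α α')ᴴ))
              - (∑ s ∈ signs, ∑ t ∈ signs, ((s * t : ℤ) : ℂ) •
                ((opB s α α' ⊗ₖ opB t α α') * ρ * (opB s α α' ⊗ₖ opB t α α')ᴴ))))
      + (∑ α : Fin 4, ∑ α' ∈ Finset.univ.filter (fun a => α < a),
          (Complex.I * (u α * (starRingEnd ℂ) (u α') - u α' * (starRingEnd ℂ) (u α))) •
            (∑ s ∈ signs, ∑ t ∈ signs, ((s * t : ℤ) : ℂ) •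
              ((opA s α α' ⊗ₖ opB t α α') * ρ * (opA s α α' ⊗ₖ opB t α α')ᴴ
                + (opB s α α' ⊗ₖ opA t α α') * ρ * (opB s α α' ⊗ₖ opA t α α')ᴴ))) := by
  rw [sum_smul_mul_mul_conjTranspose_sum_smul, Fintype.sum_sum_eq_sum_diag_add_sum_lt,
    add_assoc]
  congr 1
  · refine Finset.sum_congr rfl fun α _ => ?_
    rw [Complex.mul_conj', ((pauli_isHermitian α).kronecker (pauli_isHermitian α)).eq]
  · simp only [← Finset.sum_add_distrib]
    refine Finset.sum_congr rfl fun α _ => Finset.sum_congr rfl fun α' _ => ?_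
    simp only [opA_eq_signedHalfSum, opB_eq_signedHalfSum]
    exact cross_sandwich_eq_sum_signs _ _ ρ _ _
end

section
/- For real numbers θ₁, θ₂, θ₃, write c_k = cos θ_k and s_k = sin θ_k. Then the matrix exponential satisfies exp(i·(θ₁ σ₁⊗σ₁ + θ₂ σ₂⊗σ₂ + θ₃ σ₃⊗σ₃)) = u₀ (σ₀⊗σ₀) + u₁ (σ₁⊗σ₁) + u₂ (σ₂⊗σ₂) + u₃ (σ₃⊗σ₃), where u₀ = c₁c₂c₃ + i·s₁s₂s₃, u₁ = c₁s₂s₃ + i·s₁c₂c₃, u₂ = s₁c₂s₃ + i·c₁s₂c₃, and u₃ = s₁s₂c₃ + i·c₁c₂s₃. -/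
open Matrix Kronecker

/-! The three matrices `σₖ ⊗ σₖ` square to `1` and multiply like `(σₖ ⊗ σₖ)(σₗ ⊗ σₗ) = -(σₘ ⊗ σₘ)`
for `{k, l, m} = {1, 2, 3}`, since the factors `±i` from `σₖσₗ = ±i σₘ` appear squared. In
particular they commute, so the exponential factors as `∏ₖ exp(i θₖ σₖ ⊗ σₖ)`, each factor is
`cos θₖ + i sin θₖ σₖ ⊗ σₖ` because `σₖ ⊗ σₖ` is an involution, and expanding the product with
this multiplication table gives the coefficients `uₖ`. -/

open NormedSpace Complex

section TopologicalAlgebra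

variable {𝔸 : Type*} [Ring 𝔸] [Algebra ℂ 𝔸] [TopologicalSpace 𝔸] [IsTopologicalRing 𝔸]
  [ContinuousSMul ℂ 𝔸] [T2Space 𝔸]

theorem exp_I_mul_smul_of_mul_self_eq_one {a : 𝔸} (ha : a * a = 1) (z : ℂ) :
    exp ((I * z) • a) = cos z • (1 : 𝔸) + (I * sin z) • a := by
  rw [exp_eq_tsum ℂ]
  refine HasSum.tsum_eq (HasSum.even_add_odd ?_ ?_)
  · convert (hasSum_cos z).smul_const (1 : 𝔸) using 2 with n
    rw [smul_pow, pow_mul a, sq, ha, one_pow, smul_smul, mul_pow, pow_mul I, I_sq]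
    field_simp
  · convert ((hasSum_sin z).mul_left I).smul_const a using 2 with n
    rw [smul_pow, pow_succ a, pow_mul a, sq, ha, one_pow, one_mul, smul_smul, pow_succ, mul_pow,
      pow_mul I, I_sq]
    congr 1
    ring

end TopologicalAlgebra

section Ring

variable {R : Type*} [Ring R]

theorem mul_self_eq_one_of_mul_eq_neg {a₁ a₂ a₃ : R} (ha₁ : a₁ * a₁ = 1) (ha₂ : a₂ * a₂ = 1)
    (h₁₂ : a₁ * a₂ = -a₃) (h₂₁ : a₂ * a₁ = -a₃) : a₃ * a₃ = 1 :=
  calc a₃ * a₃ = a₁ * a₂ * (a₂ * a₁) := by rw [h₁₂, h₂₁, neg_mul_neg]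
    _ = 1 := by rw [mul_assoc, ← mul_assoc a₂, ha₂, one_mul, ha₁]

end Ring

section Algebra

variable {𝔸 : Type*} [Ring 𝔸] [Algebra ℂ 𝔸]

theorem smul_one_add_I_smul_mul_mul_of_mul_eq_neg {a₁ a₂ a₃ : 𝔸} (ha₁ : a₁ * a₁ = 1)
    (ha₂ : a₂ * a₂ = 1) (h₁₂ : a₁ * a₂ = -a₃) (h₂₁ : a₂ * a₁ = -a₃) (c₁ c₂ c₃ s₁ s₂ s₃ : ℂ) :
    (c₁ • 1 + (I * s₁) • a₁) * (c₂ • 1 + (I * s₂) • a₂) * (c₃ • 1 + (I * s₃) • a₃)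
    = (c₁ * c₂ * c₃ + I * (s₁ * s₂ * s₃)) • 1 + (c₁ * s₂ * s₃ + I * (s₁ * c₂ * c₃)) • a₁
      + (s₁ * c₂ * s₃ + I * (c₁ * s₂ * c₃)) • a₂ + (s₁ * s₂ * c₃ + I * (c₁ * c₂ * s₃)) • a₃ := by
  have e₁₂ : a₃ = -(a₁ * a₂) := by rw [h₁₂, neg_neg]
  have e₂₁ : a₃ = -(a₂ * a₁) := by rw [h₂₁, neg_neg]
  have ha₃ : a₃ * a₃ = 1 := mul_self_eq_one_of_mul_eq_neg ha₁ ha₂ h₁₂ h₂₁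
  have h₁₃ : a₁ * a₃ = -a₂ := by rw [e₁₂, mul_neg, ← mul_assoc, ha₁, one_mul]
  have h₂₃ : a₂ * a₃ = -a₁ := by rw [e₂₁, mul_neg, ← mul_assoc, ha₂, one_mul]
  simp only [add_mul, mul_add, smul_mul_smul_comm, one_mul, mul_one, neg_mul, smul_neg, ha₃, h₁₂,
    h₁₃, h₂₃]
  match_scalars <;> grind [I_sq]

end Algebra

section NormedAlgebra

variable {𝔸 : Type*} [NormedRing 𝔸] [NormedAlgebra ℂ 𝔸] [CompleteSpace 𝔸]

theorem exp_I_smul_of_mul_eq_neg {a₁ a₂ a₃ : 𝔸} (ha₁ : a₁ * a₁ = 1) (ha₂ : a₂ * a₂ = 1)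
    (h₁₂ : a₁ * a₂ = -a₃) (h₂₁ : a₂ * a₁ = -a₃) (θ₁ θ₂ θ₃ : ℝ) :
    exp (I • ((θ₁ : ℂ) • a₁ + (θ₂ : ℂ) • a₂ + (θ₃ : ℂ) • a₃))
    = ((Real.cos θ₁ * Real.cos θ₂ * Real.cos θ₃ : ℂ)
          + I * (Real.sin θ₁ * Real.sin θ₂ * Real.sin θ₃ : ℂ)) • 1
      + ((Real.cos θ₁ * Real.sin θ₂ * Real.sin θ₃ : ℂ)
          + I * (Real.sin θ₁ * Real.cos θ₂ * Real.cos θ₃ : ℂ)) • a₁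
      + ((Real.sin θ₁ * Real.cos θ₂ * Real.sin θ₃ : ℂ)
          + I * (Real.cos θ₁ * Real.sin θ₂ * Real.cos θ₃ : ℂ)) • a₂
      + ((Real.sin θ₁ * Real.sin θ₂ * Real.cos θ₃ : ℂ)
          + I * (Real.cos θ₁ * Real.cos θ₂ * Real.sin θ₃ : ℂ)) • a₃ := by
  have e₁₂ : a₃ = -(a₁ * a₂) := by rw [h₁₂, neg_neg]
  have c₁₂ : Commute a₁ a₂ := h₁₂.trans h₂₁.symm
  have c₁₃ : Commute a₁ a₃ := e₁₂ ▸ ((Commute.refl a₁).mul_right c₁₂).neg_right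
  have c₂₃ : Commute a₂ a₃ := e₁₂ ▸ (c₁₂.symm.mul_right (Commute.refl a₂)).neg_right
  have ha₃ : a₃ * a₃ = 1 := mul_self_eq_one_of_mul_eq_neg ha₁ ha₂ h₁₂ h₂₁
  have hsplit : I • ((θ₁ : ℂ) • a₁ + (θ₂ : ℂ) • a₂ + (θ₃ : ℂ) • a₃)
      = (I * θ₁) • a₁ + (I * θ₂) • a₂ + (I * θ₃) • a₃ := by
    module
  -- `exp_add_of_commute` is stated over `ℚ`; `exp` itself does not depend on the `ℚ`-structure.
  let _ : NormedAlgebra ℚ 𝔸 := NormedAlgebra.restrictScalars ℚ ℂ 𝔸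
  rw [hsplit, NormedSpace.exp_add_of_commute,
    NormedSpace.exp_add_of_commute ((c₁₂.smul_left _).smul_right _),
    exp_I_mul_smul_of_mul_self_eq_one ha₁, exp_I_mul_smul_of_mul_self_eq_one ha₂,
    exp_I_mul_smul_of_mul_self_eq_one ha₃,
    smul_one_add_I_smul_mul_mul_of_mul_eq_neg ha₁ ha₂ h₁₂ h₂₁]
  · simp only [ofReal_cos, ofReal_sin]
  · exact ((c₁₃.smul_left _).smul_right _).add_left ((c₂₃.smul_left _).smul_right _)

end NormedAlgebra

theorem pauli_one_mul_self : pauli 1 * pauli 1 = 1 := by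
  simp [pauli, one_fin_two]

theorem pauli_two_mul_self : pauli 2 * pauli 2 = 1 := by
  simp [pauli, one_fin_two]

theorem pauli_one_mul_pauli_two : pauli 1 * pauli 2 = I • pauli 3 := by
  simp [pauli]

theorem pauli_two_mul_pauli_one : pauli 2 * pauli 1 = -I • pauli 3 := by
  simp [pauli]

theorem kronecker_self_mul_kronecker_self_of_mul_eq_smul {R n : Type*} [CommRing R] [Fintype n]
    {A B C : Matrix n n R} {c : R} (h : A * B = c • C) :
    (A ⊗ₖ A) * (B ⊗ₖ B) = (c * c) • (C ⊗ₖ C) := by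
  rw [← mul_kronecker_mul, h, smul_kronecker, kronecker_smul, smul_smul]

theorem stmt6 (θ₁ θ₂ θ₃ : ℝ) :
    NormedSpace.exp
        (Complex.I • ((θ₁ : ℂ) • (pauli 1 ⊗ₖ pauli 1) + (θ₂ : ℂ) • (pauli 2 ⊗ₖ pauli 2)
          + (θ₃ : ℂ) • (pauli 3 ⊗ₖ pauli 3)))
    = ((Real.cos θ₁ * Real.cos θ₂ * Real.cos θ₃ : ℂ)
          + Complex.I * (Real.sin θ₁ * Real.sin θ₂ * Real.sin θ₃ : ℂ)) •
        (pauli 0 ⊗ₖ pauli 0)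
      + ((Real.cos θ₁ * Real.sin θ₂ * Real.sin θ₃ : ℂ)
          + Complex.I * (Real.sin θ₁ * Real.cos θ₂ * Real.cos θ₃ : ℂ)) •
        (pauli 1 ⊗ₖ pauli 1)
      + ((Real.sin θ₁ * Real.cos θ₂ * Real.sin θ₃ : ℂ)
          + Complex.I * (Real.cos θ₁ * Real.sin θ₂ * Real.cos θ₃ : ℂ)) •
        (pauli 2 ⊗ₖ pauli 2)
      + ((Real.sin θ₁ * Real.sin θ₂ * Real.cos θ₃ : ℂ)
          + Complex.I * (Real.cos θ₁ * Real.cos θ₂ * Real.sin θ₃ : ℂ)) •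
        (pauli 3 ⊗ₖ pauli 3) := by
  -- Any complete algebra norm will do: `exp` only sees the topology.
  let _ := Matrix.linftyOpNormedRing (n := Fin 2 × Fin 2) (α := ℂ)
  let _ := Matrix.linftyOpNormedAlgebra (n := Fin 2 × Fin 2) (R := ℂ) (α := ℂ)
  rw [show pauli 0 ⊗ₖ pauli 0 = 1 from one_kronecker_one]
  refine exp_I_smul_of_mul_eq_neg ?_ ?_ ?_ ?_ θ₁ θ₂ θ₃
  · rw [← mul_kronecker_mul, pauli_one_mul_self, one_kronecker_one]
  · rw [← mul_kronecker_mul, pauli_two_mul_self, one_kronecker_one]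
  · rw [kronecker_self_mul_kronecker_self_of_mul_eq_smul pauli_one_mul_pauli_two, I_mul_I,
      neg_one_smul]
  · rw [kronecker_self_mul_kronecker_self_of_mul_eq_smul pauli_two_mul_pauli_one, neg_mul_neg,
      I_mul_I, neg_one_smul]
end

section
/- Fix β ∈ {1,2,3} and θ ∈ ℝ, and define u : Fin 4 → ℂ by u₀ = cos θ, u_β = i·sin θ, and u_α = 0 for the remaining two indices (these are the coefficients of the gate exp(iθ σ_β⊗σ_β)). Then W(u) = 1 + 2·|sin(2θ)|; in particular W(u) ≤ 3, with equality when θ = π/4. -/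
/-- The overhead `W(u)` of the decomposition of the two-qubit unitary with
Pauli coefficients `u`. -/
noncomputable def W (u : Fin 4 → ℂ) : ℝ :=
  1 + ∑ α : Fin 4, ∑ α' : Fin 4,
    if α ≠ α' then
      ‖u α * (starRingEnd ℂ) (u α') + u α' * (starRingEnd ℂ) (u α)‖
        + ‖u α * (starRingEnd ℂ) (u α') - u α' * (starRingEnd ℂ) (u α)‖
    else 0

/-!
Only the pairs `(0, β)` and `(β, 0)` contribute to `W u`, each with
`‖z + conj z‖ + ‖z - conj z‖ = 2 |Re z| + 2 |Im z|` for `z = u₀ · conj u_β = -i cos θ sin θ`,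
that is `2 |cos θ sin θ| = |sin 2θ|`.
-/

open ComplexConjugate

noncomputable def pairOverhead (x y : ℂ) : ℝ :=
  ‖x * conj y + y * conj x‖ + ‖x * conj y - y * conj x‖

lemma pairOverhead_comm (x y : ℂ) : pairOverhead x y = pairOverhead y x := by
  rw [pairOverhead, pairOverhead, add_comm (x * conj y), norm_sub_rev]

@[simp] lemma pairOverhead_zero_left (y : ℂ) : pairOverhead 0 y = 0 := by
  simp [pairOverhead]

@[simp] lemma pairOverhead_zero_right (x : ℂ) : pairOverhead x 0 = 0 := by
  simp [pairOverhead]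

lemma pairOverhead_eq (x y : ℂ) :
    pairOverhead x y = 2 * (|(x * conj y).re| + |(x * conj y).im|) := by
  have hswap : y * conj x = conj (x * conj y) := by simp [mul_comm]
  rw [pairOverhead, hswap, Complex.add_conj, Complex.sub_conj, norm_mul, Complex.norm_I,
    Complex.norm_real, Complex.norm_real, Real.norm_eq_abs, Real.norm_eq_abs, abs_mul, abs_mul]
  norm_num
  ring

lemma pairOverhead_cos_I_mul_sin (θ : ℝ) :
    pairOverhead (Real.cos θ) (Complex.I * Real.sin θ) = |Real.sin (2 * θ)| := by
  have hprod : (Real.cos θ : ℂ) * conj (Complex.I * Real.sin θ)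
      = ((-(Real.cos θ * Real.sin θ) : ℝ) : ℂ) * Complex.I := by
    simp only [map_mul, Complex.conj_I, Complex.conj_ofReal]
    push_cast
    ring
  rw [pairOverhead_eq, hprod, Complex.re_ofReal_mul, Complex.im_ofReal_mul, Complex.I_re,
    Complex.I_im, mul_zero, abs_zero, zero_add, mul_one, abs_neg, Real.sin_two_mul, mul_assoc,
    abs_mul 2, abs_two, mul_comm (Real.sin θ)]

lemma sum_offDiag_eq_of_support_pair {ι M : Type*} [Fintype ι] [DecidableEq ι]
    [AddCommMonoid M] (g : ι → ι → M) {a b : ι} (hab : a ≠ b)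
    (hg : ∀ α α', (α ≠ a ∧ α ≠ b) ∨ (α' ≠ a ∧ α' ≠ b) → g α α' = 0) :
    ∑ α, ∑ α', (if α ≠ α' then g α α' else 0) = g a b + g b a := by
  have hrow (α : ι) : ∑ α', (if α ≠ α' then g α α' else 0)
      = (if α ≠ a then g α a else 0) + (if α ≠ b then g α b else 0) :=
    Fintype.sum_eq_add a b hab fun α' hα' => by simp [hg α α' (Or.inr hα')]
  rw [Fintype.sum_eq_add a b hab fun α hα => by simp [hg α _ (Or.inl hα)], hrow, hrow]
  simp [hab, hab.symm]

lemma W_eq_of_support_pair {a b : Fin 4} (hab : a ≠ b) (u : Fin 4 → ℂ)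
    (hu : ∀ α, α ≠ a → α ≠ b → u α = 0) :
    W u = 1 + 2 * pairOverhead (u a) (u b) := by
  have hW : W u = 1 + ∑ α, ∑ α', if α ≠ α' then pairOverhead (u α) (u α') else 0 := rfl
  rw [hW, sum_offDiag_eq_of_support_pair (fun α α' => pairOverhead (u α) (u α')) hab,
    pairOverhead_comm (u b), two_mul]
  rintro α α' (⟨ha, hb⟩ | ⟨ha, hb⟩) <;> simp [hu _ ha hb]

theorem stmt11 (β : Fin 4) (hβ : β ∈ ({1, 2, 3} : Finset (Fin 4))) (θ : ℝ) (u : Fin 4 → ℂ)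
    (h0 : u 0 = (Real.cos θ : ℂ)) (hb : u β = Complex.I * Real.sin θ)
    (hrest : ∀ α : Fin 4, α ≠ 0 → α ≠ β → u α = 0) :
    W u = 1 + 2 * |Real.sin (2 * θ)| ∧ W u ≤ 3 ∧ (θ = Real.pi / 4 → W u = 3) := by
  have hβ0 : (0 : Fin 4) ≠ β := by rintro rfl; simp at hβ
  have hW : W u = 1 + 2 * |Real.sin (2 * θ)| := by
    rw [W_eq_of_support_pair hβ0 u hrest, h0, hb, pairOverhead_cos_I_mul_sin]
  refine ⟨hW, ?_, fun hθ => ?_⟩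
  · linarith [Real.abs_sin_le_one (2 * θ)]
  · rw [hW, hθ, show 2 * (Real.pi / 4) = Real.pi / 2 by ring, Real.sin_pi_div_two]
    norm_num
end

section
/- Let u : Fin 4 → ℂ satisfy Σ_{α=0}^{3} |u_α|² = 1. Then (Σ_{α=0}^{3} |u_α|)² ≤ W(u). (That is, the gate-based overhead G = (Σ_α |u_α|)² is never larger than the channel-decomposition overhead W.) -/
/-!
Expanding the square and using `∑ |u_α|² = 1` gives
`(∑ |u_α|)² = 1 + ∑_{α ≠ α'} |u_α| |u_α'|`. Each off-diagonal term is
`|z|` for `z = u_α conj(u_α')`, and `2 z = (z + w) + (z - w)` for any `w`, so the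
triangle inequality bounds it by the corresponding summand of `W(u)`, even by half of it.
-/

open ComplexConjugate

theorem sq_sum_eq_sum_sq_add_sum_ne {ι R : Type*} [Fintype ι] [DecidableEq ι] [CommSemiring R]
    (f : ι → R) :
    (∑ i, f i) ^ 2 = ∑ i, f i ^ 2 + ∑ i, ∑ j, if i ≠ j then f i * f j else 0 := by
  simp only [sq, Finset.sum_mul_sum, ← Finset.sum_add_distrib]
  refine Finset.sum_congr rfl fun i _ => ?_
  rw [← Finset.add_sum_erase _ _ (Finset.mem_univ i)]
  simp [Finset.sum_ite, Finset.filter_ne]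

theorem two_mul_norm_le_norm_add_add_norm_sub {E : Type*} [SeminormedAddCommGroup E]
    [NormedSpace ℝ E] (z w : E) : 2 * ‖z‖ ≤ ‖z + w‖ + ‖z - w‖ :=
  calc 2 * ‖z‖ = ‖(z + w) + (z - w)‖ := by
        rw [add_add_sub_cancel, ← two_smul ℝ, norm_smul, Real.norm_two]
    _ ≤ ‖z + w‖ + ‖z - w‖ := norm_add_le _ _

theorem norm_mul_norm_le_norm_add_add_norm_sub {𝕜 : Type*} [RCLike 𝕜] (z w : 𝕜) :
    ‖z‖ * ‖w‖ ≤ ‖z * conj w + w * conj z‖ + ‖z * conj w - w * conj z‖ := by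
  have h := two_mul_norm_le_norm_add_add_norm_sub (z * conj w) (w * conj z)
  rw [norm_mul, RCLike.norm_conj] at h
  nlinarith [norm_nonneg z, norm_nonneg w]

theorem stmt12 (u : Fin 4 → ℂ) (hu : ∑ α : Fin 4, ‖u α‖ ^ 2 = 1) :
    (∑ α : Fin 4, ‖u α‖) ^ 2 ≤ W u := by
  rw [sq_sum_eq_sum_sq_add_sum_ne, hu, W]
  gcongr with α _ α' _
  split_ifs
  · exact norm_mul_norm_le_norm_add_add_norm_sub (u α) (u α')
  · rfl
end
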